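/- arXiv:quant-ph/0109146 — 2 statements merged into one kernel-verified Lean document; each statement's English description precedes it below -/
import Mathlib

section
/- Let H_A and H_B be finite-dimensional complex inner product spaces, and let Ψ, Φ be unit vectors in H_A ⊗ H_B. If the partial traces over H_B of the projectors onto Ψ and Φ are equal, then there exists a unitary operator U on H_B such that Ψ = (1 ⊗ U) Φ. -/
open scoped BigOperators Kronecker ComplexOrder
open Matrix

namespace DEsp

variable {m n ι : Type*}

/-- Outer product `|v⟩⟨v|` as a matrix: `(outer v) i j = v i * conj (v j)`. -/
noncomputable def outer [Fintype m] (v : m → ℂ) : Matrix m m ℂ :=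
  Matrix.of fun i j => v i * star (v j)

/-- Tensor product of vectors. -/
noncomputable def tens (u : m → ℂ) (v : n → ℂ) : m × n → ℂ := fun p => u p.1 * v p.2

/-- Partial trace over the second factor. -/
noncomputable def ptraceB [Fintype n] (ρ : Matrix (m × n) (m × n) ℂ) : Matrix m m ℂ :=
  Matrix.of fun i i' => ∑ k, ρ (i, k) (i', k)

/-- Partial trace over the first factor. -/
noncomputable def ptraceA [Fintype m] (ρ : Matrix (m × n) (m × n) ℂ) : Matrix n n ℂ :=
  Matrix.of fun j j' => ∑ k, ρ (k, j) (k, j')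

/-- Hermitian inner product (conjugate-linear in the first slot). -/
noncomputable def inn [Fintype m] (u v : m → ℂ) : ℂ := ∑ i, star (u i) * v i

/-- `v` is a unit vector. -/
def unitVec [Fintype m] (v : m → ℂ) : Prop := inn v v = 1

/-- An orthonormal family of vectors. -/
def orthonormal [Fintype m] [DecidableEq ι] (f : ι → m → ℂ) : Prop :=
  ∀ j k, inn (f j) (f k) = if j = k then 1 else 0

/-- A density operator: positive semidefinite with trace 1. -/
def IsDensity [Fintype m] (ρ : Matrix m m ℂ) : Prop := ρ.PosSemidef ∧ ρ.trace = 1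

end DEsp

/-!
Read `X : m × n → ℂ` as an `m × n` matrix with rows `X(i, ·) ∈ H_B`. Then `Tr_B |X⟩⟨X|` is the
transposed Gram matrix of these rows, so the hypothesis says that the rows of `Ψ` and of `Φ` have
the same Gram matrix. Families with equal Gram matrices differ by a unitary: `∑ cᵢ Φᵢ ↦ ∑ cᵢ Ψᵢ`
is well defined and isometric on the span of the `Φᵢ`, and extends to a unitary `U` of `H_B`.
Applying `U` to every row is applying `1 ⊗ U`.
-/

namespace DEsp

open scoped InnerProductSpace

section IsometryExtension

variable {𝕜 V E : Type*} [RCLike 𝕜] [AddCommGroup V] [Module 𝕜 V]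
  [NormedAddCommGroup E] [InnerProductSpace 𝕜 E] [FiniteDimensional 𝕜 E]

theorem exists_linearIsometryEquiv_comp_eq_of_norm_eq (f g : V →ₗ[𝕜] E)
    (hfg : ∀ x, ‖f x‖ = ‖g x‖) : ∃ W : E ≃ₗᵢ[𝕜] E, ∀ x, W (f x) = g x := by
  have hker : LinearMap.ker f ≤ LinearMap.ker g := fun x hx => by
    rw [LinearMap.mem_ker, ← norm_eq_zero, ← hfg, norm_eq_zero]
    exact hx
  let L : LinearMap.range f →ₗ[𝕜] E :=
    (LinearMap.ker f).liftQ g hker ∘ₗ f.quotKerEquivRange.symm.toLinearMap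
  have hL : ∀ x, L ⟨f x, LinearMap.mem_range_self f x⟩ = g x := fun x => by
    have : f.quotKerEquivRange.symm ⟨f x, LinearMap.mem_range_self f x⟩ =
        Submodule.Quotient.mk x :=
      f.quotKerEquivRange.symm_apply_eq.mpr (Subtype.ext (f.quotKerEquivRange_apply_mk x).symm)
    simp only [L, LinearMap.comp_apply, LinearEquiv.coe_toLinearMap, this, Submodule.liftQ_apply]
  let Li : LinearMap.range f →ₗᵢ[𝕜] E :=
    ⟨L, by rintro ⟨_, x, rfl⟩; rw [hL, ← hfg, Submodule.coe_norm]⟩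
  refine ⟨Li.extend.toLinearIsometryEquiv rfl, fun x => ?_⟩
  rw [LinearIsometry.coe_toLinearIsometryEquiv]
  exact (Li.extend_apply ⟨f x, LinearMap.mem_range_self f x⟩).trans (hL x)

theorem exists_linearIsometryEquiv_map_eq_of_gram_eq {ι : Type*} [Fintype ι] {v w : ι → E}
    (h : gram 𝕜 v = gram 𝕜 w) : ∃ W : E ≃ₗᵢ[𝕜] E, ∀ i, W (v i) = w i := by
  classical
  obtain ⟨W, hW⟩ := exists_linearIsometryEquiv_comp_eq_of_norm_eq
    (Fintype.linearCombination 𝕜 v) (Fintype.linearCombination 𝕜 w) fun c => by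
      rw [norm_eq_sqrt_re_inner (𝕜 := 𝕜), norm_eq_sqrt_re_inner (𝕜 := 𝕜)]
      simp only [Fintype.linearCombination_apply, ← star_dotProduct_gram_mulVec, h]
  exact ⟨W, fun i => by simpa using hW (Pi.single i 1)⟩

end IsometryExtension

theorem toEuclideanCLM_symm_mem_unitaryGroup {𝕜 n : Type*} [RCLike 𝕜] [Fintype n]
    [DecidableEq n] (W : EuclideanSpace 𝕜 n ≃ₗᵢ[𝕜] EuclideanSpace 𝕜 n) :
    (toEuclideanCLM (n := n) (𝕜 := 𝕜)).symm (W : EuclideanSpace 𝕜 n →L[𝕜] EuclideanSpace 𝕜 n) ∈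
      unitaryGroup n 𝕜 :=
  Unitary.map_mem _ (Unitary.linearIsometryEquiv.symm W).2

theorem one_kronecker_mulVec_apply {R m n : Type*} [Semiring R] [Fintype m] [Fintype n]
    [DecidableEq m] (U : Matrix n n R) (x : m × n → R) (i : m) (j : n) :
    ((1 : Matrix m m R) ⊗ₖ U *ᵥ x) (i, j) = (U *ᵥ fun j' => x (i, j')) j := by
  simp [mulVec, dotProduct, Fintype.sum_prod_type, kroneckerMap_apply, one_apply, ite_mul]

section RowVectors

variable {m n : Type*} [Fintype m] [Fintype n]

noncomputable def rowVec (X : m × n → ℂ) (i : m) : EuclideanSpace ℂ n :=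
  WithLp.toLp 2 fun j => X (i, j)

theorem gram_rowVec (X : m × n → ℂ) : gram ℂ (rowVec X) = (ptraceB (outer X))ᵀ := by
  ext i i'
  simp [gram_apply, rowVec, ptraceB, outer, PiLp.inner_apply]

end RowVectors

theorem stmt0_general {m n : Type*} [Fintype m] [Fintype n] [DecidableEq m] [DecidableEq n]
    (Ψ Φ : m × n → ℂ) (h : ptraceB (outer Ψ) = ptraceB (outer Φ)) :
    ∃ U : Matrix n n ℂ, U ∈ Matrix.unitaryGroup n ℂ ∧
      Ψ = ((1 : Matrix m m ℂ) ⊗ₖ U) *ᵥ Φ := by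
  obtain ⟨W, hW⟩ :=
    exists_linearIsometryEquiv_map_eq_of_gram_eq (v := rowVec Φ) (w := rowVec Ψ) <| by
      rw [gram_rowVec, gram_rowVec, h]
  refine ⟨_, toEuclideanCLM_symm_mem_unitaryGroup W, funext fun ⟨i, j⟩ => ?_⟩
  rw [one_kronecker_mulVec_apply]
  change Ψ (i, j) = (_ *ᵥ WithLp.ofLp (rowVec Φ i)) j
  rw [← ofLp_toEuclideanCLM, StarAlgEquiv.apply_symm_apply]
  exact (congrArg (· j) (hW i)).symm

/-- GHJW Lemma: purifications with equal `B`-partial traces are related by a local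
unitary on `H_B`. -/
theorem stmt0 {m n : Type*} [Fintype m] [Fintype n] [DecidableEq m] [DecidableEq n]
    (Ψ Φ : m × n → ℂ) (hΨ : unitVec Ψ) (hΦ : unitVec Φ)
    (h : ptraceB (outer Ψ) = ptraceB (outer Φ)) :
    ∃ U : Matrix n n ℂ, U ∈ Matrix.unitaryGroup n ℂ ∧
      Ψ = ((1 : Matrix m m ℂ) ⊗ₖ U) *ᵥ Φ :=
  stmt0_general Ψ Φ h

end DEsp
end

section
/- Let Ψ be a unit vector in H_A ⊗ H_B with reduced density operator ρ_A = Tr_B |Ψ⟩⟨Ψ|. For any expression ρ_A = Σ_{j=1}^m f_j |φ_j⟩⟨φ_j| as a convex combination of rank-one projectors onto unit vectors φ_j in H_A, with f_j > 0, Σ f_j = 1, and m ≤ dim H_B, there exists an orthonormal family (c_j)_{j=1}^m in H_B such that Ψ = Σ_{j=1}^m √(f_j) φ_j ⊗ c_j. -/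
/-!
Let `P` be the coefficient matrix of `Ψ` and `B` the matrix whose `j`-th column is `√f_j φ_j`.
The decomposition says `P Pᴴ = B Bᴴ`, so the maps `Pᴴ` and `Bᴴ` out of `H_A` have the same Gram
form. Hence `Bᴴ x ↦ Pᴴ x` is a well-defined isometry on the range of `Bᴴ`, and since
`M ≤ dim H_B` it extends to an isometry `J : ℂ^M → H_B`. Then `Pᴴ = J Bᴴ`, i.e. `P = B C` for
`C = Jᴴ`, whose rows `c_j` are orthonormal because `C Cᴴ = Jᴴ J = 1`.
-/

open scoped BigOperators Kronecker ComplexOrder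
open Matrix

open scoped InnerProductSpace
open Module

section IsometricExtension

variable {𝕜 H K V : Type*} [RCLike 𝕜]
  [NormedAddCommGroup H] [InnerProductSpace 𝕜 H]
  [NormedAddCommGroup K] [InnerProductSpace 𝕜 K]
  [NormedAddCommGroup V] [InnerProductSpace 𝕜 V]

theorem LinearMap.ker_le_ker_of_inner_eq {a : H →ₗ[𝕜] K} {b : H →ₗ[𝕜] V}
    (h : ∀ x y, ⟪a x, a y⟫_𝕜 = ⟪b x, b y⟫_𝕜) : LinearMap.ker b ≤ LinearMap.ker a := by
  intro x hx
  rw [LinearMap.mem_ker] at hx ⊢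
  rw [← inner_self_eq_zero (𝕜 := 𝕜), h, hx, inner_zero_left]

variable [FiniteDimensional 𝕜 K] [FiniteDimensional 𝕜 V]

theorem LinearIsometry.nonempty_of_finrank_le (h : finrank 𝕜 V ≤ finrank 𝕜 K) :
    Nonempty (V →ₗᵢ[𝕜] K) := by
  let β := stdOrthonormalBasis 𝕜 V
  let γ := (stdOrthonormalBasis 𝕜 K).toBasis
  have hγ : Orthonormal 𝕜 (γ ∘ Fin.castLE h) :=
    (stdOrthonormalBasis 𝕜 K).orthonormal.comp _ (Fin.castLE_injective h)
  refine ⟨(β.toBasis.constr 𝕜 (γ ∘ Fin.castLE h)).isometryOfOrthonormal (v := β.toBasis)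
    (by rw [OrthonormalBasis.coe_toBasis]; exact β.orthonormal) ?_⟩
  simpa [Function.comp_def, Basis.constr_basis] using hγ

theorem LinearMap.exists_linearIsometry_comp_eq_of_inner_eq'
    (a b : H →ₗ[𝕜] K) (h : ∀ x y, ⟪a x, a y⟫_𝕜 = ⟪b x, b y⟫_𝕜) :
    ∃ J : K →ₗᵢ[𝕜] K, ∀ x, J (b x) = a x := by
  let L : LinearMap.range b →ₗ[𝕜] K :=
    (LinearMap.ker b).liftQ a (LinearMap.ker_le_ker_of_inner_eq h) ∘ₗ b.quotKerEquivRange.symm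
  have hL : ∀ x, L ⟨b x, LinearMap.mem_range_self b x⟩ = a x := fun x => by simp [L]
  have hLinner : ∀ s t, ⟪L s, L t⟫_𝕜 = ⟪s, t⟫_𝕜 := by
    rintro ⟨_, x, rfl⟩ ⟨_, y, rfl⟩
    rw [hL, hL, h, Submodule.coe_inner]
  refine ⟨(L.isometryOfInner hLinner).extend, fun x => ?_⟩
  rw [← hL x, ← LinearMap.coe_isometryOfInner L hLinner]
  exact LinearIsometry.extend_apply _ ⟨b x, _⟩

theorem LinearMap.exists_linearIsometry_comp_eq_of_inner_eq
    (hdim : finrank 𝕜 V ≤ finrank 𝕜 K) (a : H →ₗ[𝕜] K) (b : H →ₗ[𝕜] V)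
    (h : ∀ x y, ⟪a x, a y⟫_𝕜 = ⟪b x, b y⟫_𝕜) :
    ∃ J : V →ₗᵢ[𝕜] K, ∀ x, J (b x) = a x := by
  obtain ⟨ι⟩ := LinearIsometry.nonempty_of_finrank_le hdim
  obtain ⟨U, hU⟩ := a.exists_linearIsometry_comp_eq_of_inner_eq' (ι.toLinearMap ∘ₗ b)
    fun x y => by simpa using h x y
  exact ⟨U.comp ι, hU⟩

end IsometricExtension

namespace Matrix

variable {𝕜 m n p : Type*} [RCLike 𝕜] [Fintype m] [Fintype n] [Fintype p]
  [DecidableEq m] [DecidableEq n] [DecidableEq p]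

theorem inner_toEuclideanLin_conjTranspose (A : Matrix m n 𝕜) (x y : EuclideanSpace 𝕜 m) :
    ⟪toEuclideanLin Aᴴ x, toEuclideanLin Aᴴ y⟫_𝕜 = ⟪x, toEuclideanLin (A * Aᴴ) y⟫_𝕜 := by
  rw [toEuclideanLin_conjTranspose_eq_adjoint, LinearMap.adjoint_inner_left,
    ← toEuclideanLin_conjTranspose_eq_adjoint, toLpLin_mul_same, LinearMap.comp_apply]

theorem exists_mul_eq_of_mul_conjTranspose_eq (P : Matrix m n 𝕜) (B : Matrix m p 𝕜)
    (hPB : P * Pᴴ = B * Bᴴ) (hcard : Fintype.card p ≤ Fintype.card n) :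
    ∃ C : Matrix p n 𝕜, C * Cᴴ = 1 ∧ P = B * C := by
  obtain ⟨J, hJ⟩ := (toEuclideanLin Pᴴ).exists_linearIsometry_comp_eq_of_inner_eq
    (by simpa using hcard) (toEuclideanLin Bᴴ) fun x y => by
      rw [inner_toEuclideanLin_conjTranspose, inner_toEuclideanLin_conjTranspose, hPB]
  set Jm := toEuclideanLin.symm J.toLinearMap
  have hJm : toEuclideanLin Jm = J.toLinearMap := LinearEquiv.apply_symm_apply _ _
  refine ⟨Jmᴴ, ?_, ?_⟩
  · apply toEuclideanLin.injective
    rw [conjTranspose_conjTranspose, toLpLin_mul_same, toEuclideanLin_conjTranspose_eq_adjoint,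
      hJm, LinearIsometry.adjoint_comp_self', toLpLin_one]
  · rw [← conjTranspose_conjTranspose P, ← conjTranspose_conjTranspose B, ← conjTranspose_mul]
    congr 1
    apply toEuclideanLin.injective
    ext1 x
    rw [toLpLin_mul_same, LinearMap.comp_apply, hJm, LinearIsometry.coe_toLinearMap, hJ]

end Matrix

namespace DEsp

section

variable {m n ι : Type*} [Fintype m] [Fintype n]

theorem ptraceB_outer (Ψ : m × n → ℂ) :
    ptraceB (outer Ψ) = of (Function.curry Ψ) * (of (Function.curry Ψ))ᴴ := by
  ext i i'
  simp [ptraceB, outer, mul_apply]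

theorem sum_smul_outer_eq_mul_conjTranspose [Fintype ι] (f : ι → ℝ) (hf : ∀ j, 0 ≤ f j)
    (φ : ι → m → ℂ) :
    ∑ j, (f j : ℂ) • outer (φ j) =
      of (fun i j => (√(f j) : ℂ) * φ j i) * (of fun i j => (√(f j) : ℂ) * φ j i)ᴴ := by
  ext i i'
  simp only [Matrix.sum_apply, Matrix.smul_apply, outer, of_apply, mul_apply, conjTranspose_apply,
    star_mul', Complex.star_def, Complex.conj_ofReal, smul_eq_mul]
  refine Finset.sum_congr rfl fun j _ => ?_
  have hsq : (√(f j) : ℂ) * √(f j) = f j := by exact_mod_cast Real.mul_self_sqrt (hf j)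
  linear_combination (φ j i * (starRingEnd ℂ) (φ j i')) * hsq.symm

theorem orthonormal_of_mul_conjTranspose_eq_one [DecidableEq ι] (C : Matrix ι n ℂ)
    (hC : C * Cᴴ = 1) : orthonormal C := by
  intro j k
  have hinn : inn (C j) (C k) = (C * Cᴴ) k j := by
    simp only [inn, mul_apply, conjTranspose_apply, mul_comm]
  rw [hinn, hC, one_apply]
  exact if_congr eq_comm rfl rfl

end

theorem stmt1_general {m n : Type*} [Fintype m] [Fintype n]
    (Ψ : m × n → ℂ)
    (M : ℕ) (hM : M ≤ Fintype.card n)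
    (f : Fin M → ℝ) (hf : ∀ j, 0 < f j)
    (φ : Fin M → m → ℂ)
    (hdec : ptraceB (outer Ψ) = ∑ j, (f j : ℂ) • outer (φ j)) :
    ∃ c : Fin M → n → ℂ, orthonormal c ∧
      Ψ = ∑ j, (Real.sqrt (f j) : ℂ) • tens (φ j) (c j) := by
  classical
  obtain ⟨C, hC, hΨC⟩ := exists_mul_eq_of_mul_conjTranspose_eq (of (Function.curry Ψ))
    (of fun i j => (√(f j) : ℂ) * φ j i)
    (by rw [← ptraceB_outer, hdec, sum_smul_outer_eq_mul_conjTranspose f fun j => (hf j).le])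
    (by simpa using hM)
  refine ⟨C, orthonormal_of_mul_conjTranspose_eq_one C hC, ?_⟩
  funext ⟨i, k⟩
  simpa [tens, mul_apply, Finset.sum_apply, mul_assoc] using congrFun (congrFun hΨC i) k

/-- GHJW Theorem: any convex decomposition of the reduced density operator is realized
by an orthonormal family in the ancilla. -/
theorem stmt1 {m n : Type*} [Fintype m] [Fintype n]
    (Ψ : m × n → ℂ) (hΨ : unitVec Ψ)
    (M : ℕ) (hM : M ≤ Fintype.card n)
    (f : Fin M → ℝ) (hf : ∀ j, 0 < f j) (hsum : ∑ j, f j = 1)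
    (φ : Fin M → m → ℂ) (hφ : ∀ j, unitVec (φ j))
    (hdec : ptraceB (outer Ψ) = ∑ j, (f j : ℂ) • outer (φ j)) :
    ∃ c : Fin M → n → ℂ, orthonormal c ∧
      Ψ = ∑ j, (Real.sqrt (f j) : ℂ) • tens (φ j) (c j) :=
  stmt1_general Ψ M hM f hf φ hdec

end DEsp
end
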